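/- arXiv:2506.10340 — 4 statements merged into one kernel-verified Lean document; each statement's English description precedes it below -/
import Mathlib

section
/- Fix real numbers y ∈ (0,1) and d > 0. For each natural number n ≥ 1 define Fₙ : ℕ → ℝ by Fₙ(s) = (1 − (1−y)^s)·y·n − s·d, and let s*ₙ be any maximizer of Fₙ over ℕ. Then s*ₙ / log n converges to 1/log(1/(1−y)) as n → ∞. -/
open Filter

/-- The optimal number of seeds grows like `log n / log (1/(1-y))`. -/
theorem optimal_seeds_log_growth (y d : ℝ) (hy : y ∈ Set.Ioo (0 : ℝ) 1) (hd : 0 < d)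
    (s : ℕ → ℕ)
    (hmax : ∀ n : ℕ, 1 ≤ n → ∀ t : ℕ,
      (1 - (1 - y) ^ t) * y * n - t * d ≤ (1 - (1 - y) ^ (s n)) * y * n - (s n) * d) :
    Tendsto (fun n : ℕ => (s n : ℝ) / Real.log n) atTop
      (nhds (1 / Real.log (1 / (1 - y)))) := by
  obtain ⟨hy0, hy1⟩ := hy
  have hq0 : (0:ℝ) < 1 - y := by linarith
  have hq1 : (1:ℝ) - y < 1 := by linarith
  have hlogq : Real.log (1 - y) < 0 := Real.log_neg hq0 hq1
  set L := Real.log (1 / (1 - y)) with hLdef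
  have hL : L = -Real.log (1 - y) := by rw [hLdef, one_div, Real.log_inv]
  have hLpos : 0 < L := by rw [hL]; linarith
  set c := Real.log (y ^ 2) - Real.log d with hc
  -- first-order conditions
  have key1 : ∀ n : ℕ, 1 ≤ n → (1 - y) ^ (s n) * (y ^ 2 * n) ≤ d := by
    intro n hn
    have h := hmax n hn (s n + 1)
    rw [pow_succ] at h
    push_cast at h
    nlinarith [h]
  have key2 : ∀ n : ℕ, 1 ≤ n → 1 ≤ s n → d ≤ (1 - y) ^ (s n - 1) * (y ^ 2 * n) := by
    intro n hn hs
    obtain ⟨k, hk⟩ : ∃ k, s n = k + 1 := ⟨s n - 1, (Nat.succ_pred_eq_of_pos hs).symm⟩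
    have h := hmax n hn k
    rw [hk, pow_succ] at h
    have hk' : s n - 1 = k := by omega
    rw [hk']
    push_cast at h
    nlinarith [h]
  -- logarithmic bounds
  have hnpos : ∀ n : ℕ, 1 ≤ n → (0:ℝ) < (n : ℝ) := by
    intro n hn; exact_mod_cast Nat.lt_of_lt_of_le Nat.zero_lt_one hn
  have hy2 : (0:ℝ) < y ^ 2 := by positivity
  have lower : ∀ n : ℕ, 1 ≤ n → Real.log n + c ≤ (s n : ℝ) * L := by
    intro n hn
    have h := key1 n hn
    have hpos : (0:ℝ) < (1 - y) ^ (s n) * (y ^ 2 * n) := by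
      have := hnpos n hn; positivity
    have hlog := Real.log_le_log hpos h
    rw [Real.log_mul (by positivity) (by nlinarith [hnpos n hn]),
        Real.log_mul (by positivity) (by nlinarith [hnpos n hn]),
        Real.log_pow] at hlog
    rw [hL]
    nlinarith [hlog]
  have upper : ∀ n : ℕ, 1 ≤ n → 1 ≤ s n → (s n : ℝ) * L ≤ Real.log n + c + L := by
    intro n hn hs
    have h := key2 n hn hs
    have hpos : (0:ℝ) < d := hd
    have hlog := Real.log_le_log hpos h
    rw [Real.log_mul (by positivity) (by nlinarith [hnpos n hn]),
        Real.log_mul (by positivity) (by nlinarith [hnpos n hn]),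
        Real.log_pow] at hlog
    have hcast : ((s n - 1 : ℕ) : ℝ) = (s n : ℝ) - 1 := by push_cast [hs]; ring
    rw [hcast] at hlog
    rw [hL]
    nlinarith [hlog]
  -- limit of 1/log n
  have hlogtop : Tendsto (fun n : ℕ => Real.log n) atTop atTop :=
    Real.tendsto_log_atTop.comp tendsto_natCast_atTop_atTop
  have hinv : Tendsto (fun n : ℕ => (Real.log n)⁻¹) atTop (nhds 0) :=
    hlogtop.inv_tendsto_atTop
  -- squeeze
  have hlo : Tendsto (fun n : ℕ => 1 / L + (c / L) * (Real.log n)⁻¹) atTop (nhds (1 / L)) := by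
    have := (tendsto_const_nhds (x := 1 / L) (f := atTop (α := ℕ))).add
      ((tendsto_const_nhds (x := c / L) (f := atTop (α := ℕ))).mul hinv)
    simpa using this
  have hhi : Tendsto (fun n : ℕ => 1 / L + ((c + L) / L) * (Real.log n)⁻¹) atTop (nhds (1 / L)) := by
    have := (tendsto_const_nhds (x := 1 / L) (f := atTop (α := ℕ))).add
      ((tendsto_const_nhds (x := (c + L) / L) (f := atTop (α := ℕ))).mul hinv)
    simpa using this
  refine tendsto_of_tendsto_of_tendsto_of_le_of_le' hlo hhi ?_ ?_
  · -- lower eventual bound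
    filter_upwards [eventually_ge_atTop 1, hlogtop.eventually_ge_atTop (max 1 (1 - c))]
      with n hn hln
    have hln1 : (1:ℝ) ≤ Real.log n := le_trans (le_max_left _ _) hln
    have hlnpos : (0:ℝ) < Real.log n := by linarith
    have hlnc : 1 - c ≤ Real.log n := le_trans (le_max_right _ _) hln
    have hlow := lower n hn
    have e : 1 / L + (c / L) * (Real.log n)⁻¹ = (Real.log n + c) / (L * Real.log n) := by
      field_simp
      try ring
    rw [e, div_le_div_iff₀ (by positivity) hlnpos]
    linarith [mul_le_mul_of_nonneg_right hlow hlnpos.le]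
  · -- upper eventual bound
    filter_upwards [eventually_ge_atTop 1, hlogtop.eventually_ge_atTop (max 1 (1 - c))]
      with n hn hln
    have hln1 : (1:ℝ) ≤ Real.log n := le_trans (le_max_left _ _) hln
    have hlnpos : (0:ℝ) < Real.log n := by linarith
    have hlnc : 1 - c ≤ Real.log n := le_trans (le_max_right _ _) hln
    have hlow := lower n hn
    have hs1 : 1 ≤ s n := by
      by_contra hs0
      have : s n = 0 := by omega
      rw [this] at hlow
      push_cast at hlow
      nlinarith [hlow]
    have hup := upper n hn hs1
    have e : 1 / L + ((c + L) / L) * (Real.log n)⁻¹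
        = (Real.log n + c + L) / (L * Real.log n) := by
      field_simp
      ring
    rw [e, div_le_div_iff₀ hlnpos (by positivity)]
    linarith [mul_le_mul_of_nonneg_right hup hlnpos.le]
end

section
/- Let ι be a nonempty finite index set, let yᵢ ∈ (0,1) and aᵢ > 0 for each i ∈ ι, let Y ≥ 0, and define U(S) = (1 − ∏ᵢ (1−yᵢ)^{Sᵢ})·Y − ∑ᵢ Sᵢ·aᵢ for vectors S with all Sᵢ ≥ 0. Let j* ∈ ι minimize aᵢ/(−log(1−yᵢ)) over ι. Then for every such vector S there exists t ≥ 0 such that the vector placing t on coordinate j* and 0 elsewhere achieves U at least U(S). -/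
/-!
With `Lᵢ = -log (1 - yᵢ) > 0`, the miss probability `∏ (1 - yᵢ) ^ Sᵢ` equals `exp (-∑ Sᵢ Lᵢ)`,
so it depends on `S` only through the exposure `∑ Sᵢ Lᵢ`. Seeding `t = (∑ Sᵢ Lᵢ) / L_{j*}` on
type `j*` alone has the same exposure, hence the same benefit, and its cost
`t a_{j*} = ∑ Sᵢ Lᵢ (a_{j*} / L_{j*})` is at most `∑ Sᵢ Lᵢ (aᵢ / Lᵢ) = ∑ Sᵢ aᵢ`.
-/

open Finset Real

lemma rpow_eq_prod_rpow_of_mul_log_eq {ι : Type*} {s : Finset ι} {b S : ι → ℝ}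
    (hb : ∀ i ∈ s, 0 < b i) {j : ι} (hj : j ∈ s) {t : ℝ}
    (ht : t * log (b j) = ∑ i ∈ s, S i * log (b i)) :
    b j ^ t = ∏ i ∈ s, b i ^ S i := by
  rw [rpow_def_of_pos (hb j hj), mul_comm, ht, exp_sum]
  refine prod_congr rfl fun i hi => ?_
  rw [rpow_def_of_pos (hb i hi), mul_comm]

lemma sum_div_mul_le_sum_mul_of_div_le {ι : Type*} {s : Finset ι} {L a S : ι → ℝ}
    (hL : ∀ i ∈ s, 0 < L i) (hS : ∀ i ∈ s, 0 ≤ S i) {j : ι}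
    (hj : ∀ i ∈ s, a j / L j ≤ a i / L i) :
    (∑ i ∈ s, S i * L i) / L j * a j ≤ ∑ i ∈ s, S i * a i := by
  rw [div_mul_eq_mul_div, mul_div_assoc, sum_mul]
  refine sum_le_sum fun i hi => ?_
  calc S i * L i * (a j / L j) ≤ S i * L i * (a i / L i) :=
        mul_le_mul_of_nonneg_left (hj i hi) (mul_nonneg (hS i hi) (hL i hi).le)
    _ = S i * a i := by field_simp [(hL i hi).ne']

theorem single_type_dominates_general {ι : Type*} [Fintype ι] [DecidableEq ι]
    (y a : ι → ℝ) (hy : ∀ i, y i ∈ Set.Ioo (0 : ℝ) 1)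
    (Y : ℝ)
    (j : ι) (hj : ∀ i, a j / (-Real.log (1 - y j)) ≤ a i / (-Real.log (1 - y i)))
    (S : ι → ℝ) (hS : ∀ i, 0 ≤ S i) :
    ∃ t : ℝ, 0 ≤ t ∧
      (1 - ∏ i, (1 - y i) ^ (if i = j then t else 0)) * Y
          - ∑ i, (if i = j then t else 0) * a i ≥
        (1 - ∏ i, (1 - y i) ^ (S i)) * Y - ∑ i, S i * a i := by
  have hb : ∀ i, 0 < 1 - y i := fun i => sub_pos.2 (hy i).2
  have hL : ∀ i, 0 < -log (1 - y i) := fun i =>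
    neg_pos.2 (log_neg (hb i) (sub_lt_self 1 (hy i).1))
  set t := (∑ i, S i * -log (1 - y i)) / -log (1 - y j)
  have hprod : (1 - y j) ^ t = ∏ i, (1 - y i) ^ S i := by
    refine rpow_eq_prod_rpow_of_mul_log_eq (fun i _ => hb i) (mem_univ j) ?_
    simp only [t, sum_neg_distrib, mul_neg, neg_div_neg_eq]
    exact div_mul_cancel₀ _ (neg_ne_zero.1 (hL j).ne')
  have hcost : t * a j ≤ ∑ i, S i * a i :=
    sum_div_mul_le_sum_mul_of_div_le (fun i _ => hL i) (fun i _ => hS i) (fun i _ => hj i)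
  refine ⟨t, div_nonneg (sum_nonneg fun i _ => mul_nonneg (hS i) (hL i).le) (hL j).le, ?_⟩
  rw [Fintype.prod_eq_single j (fun i hi => by simp [hi]),
    Fintype.sum_eq_single j (fun i hi => by simp [hi])]
  simp only [if_pos, hprod]
  linarith

/-- Seeding only the type `j*` minimizing `aᵢ / (-log (1-yᵢ))` weakly dominates any
seeding vector. -/
theorem single_type_dominates {ι : Type*} [Fintype ι] [Nonempty ι] [DecidableEq ι]
    (y a : ι → ℝ) (hy : ∀ i, y i ∈ Set.Ioo (0 : ℝ) 1) (ha : ∀ i, 0 < a i)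
    (Y : ℝ) (hY : 0 ≤ Y)
    (j : ι) (hj : ∀ i, a j / (-Real.log (1 - y j)) ≤ a i / (-Real.log (1 - y i)))
    (S : ι → ℝ) (hS : ∀ i, 0 ≤ S i) :
    ∃ t : ℝ, 0 ≤ t ∧
      (1 - ∏ i, (1 - y i) ^ (if i = j then t else 0)) * Y
          - ∑ i, (if i = j then t else 0) * a i ≥
        (1 - ∏ i, (1 - y i) ^ (S i)) * Y - ∑ i, S i * a i :=
  single_type_dominates_general y a hy Y j hj S hS
end

section
/- Let ι be a nonempty finite index set, let yᵢ ∈ (0,1) and aᵢ > 0 for each i ∈ ι, define U(S) = (1 − ∏ᵢ (1−yᵢ)^{Sᵢ})·Y − ∑ᵢ Sᵢ·aᵢ for vectors S with all Sᵢ ≥ 0, and set r = minᵢ aᵢ/(−log(1−yᵢ)). If Y ≥ r > 0, then the supremum of U over all such vectors S equals Y − r·(1 + log(Y/r)). -/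
open Finset

/-- The supremum of the relaxed seeding utility equals `Y - r (1 + log (Y / r))`, where
`r` is the least marginal cost per unit of log-coverage. -/
theorem relaxed_sup_value {ι : Type*} [Fintype ι] [Nonempty ι]
    (y a : ι → ℝ) (hy : ∀ i, y i ∈ Set.Ioo (0 : ℝ) 1) (ha : ∀ i, 0 < a i)
    (Y : ℝ)
    (r : ℝ) (hr : r = Finset.univ.inf' Finset.univ_nonempty
      (fun i => a i / (-Real.log (1 - y i))))
    (hrpos : 0 < r) (hYr : r ≤ Y) :
    sSup {u : ℝ | ∃ S : ι → ℝ, (∀ i, 0 ≤ S i) ∧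
        u = (1 - ∏ i, (1 - y i) ^ (S i)) * Y - ∑ i, S i * a i} =
      Y - r * (1 + Real.log (Y / r)) := by
  classical
  have hY : 0 < Y := lt_of_lt_of_le hrpos hYr
  set c : ι → ℝ := fun i => -Real.log (1 - y i) with hcdef
  have h1y : ∀ i, 0 < 1 - y i := fun i => by have := (hy i).2; linarith
  have hc_pos : ∀ i, 0 < c i := by
    intro i
    have h2 : 1 - y i < 1 := by have := (hy i).1; linarith
    have := Real.log_neg (h1y i) h2
    simpa [hcdef] using neg_pos.mpr this
  have hr_le : ∀ i, r * c i ≤ a i := by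
    intro i
    have h : r ≤ a i / c i := by
      rw [hr]; exact Finset.inf'_le _ (Finset.mem_univ i)
    have hci := hc_pos i
    calc r * c i ≤ (a i / c i) * c i :=
          mul_le_mul_of_nonneg_right h (le_of_lt hci)
      _ = a i := by field_simp
  -- product formula
  have hprod : ∀ S : ι → ℝ, ∏ i, (1 - y i) ^ (S i) = Real.exp (-(∑ i, S i * c i)) := by
    intro S
    have hneg : -(∑ i, S i * c i) = ∑ i, Real.log (1 - y i) * S i := by
      rw [← Finset.sum_neg_distrib]
      refine Finset.sum_congr rfl fun i _ => by simp [hcdef]; ring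
    rw [hneg, Real.exp_sum]
    exact Finset.prod_congr rfl fun i _ => Real.rpow_def_of_pos (h1y i) _
  -- the one-dimensional bound
  have hbd : ∀ t : ℝ, (1 - Real.exp (-t)) * Y - r * t ≤ Y - r * (1 + Real.log (Y / r)) := by
    intro t
    have hYr' : 0 < Y / r := div_pos hY hrpos
    have key : (Real.log (Y / r) - t) + 1 ≤ Real.exp (Real.log (Y / r) - t) :=
      Real.add_one_le_exp _
    have hexp : Real.exp (Real.log (Y / r) - t) = (Y / r) * Real.exp (-t) := by
      rw [sub_eq_add_neg, Real.exp_add, Real.exp_log hYr']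
    rw [hexp] at key
    have hrne : r ≠ 0 := ne_of_gt hrpos
    have : r * ((Real.log (Y / r) - t) + 1) ≤ Y * Real.exp (-t) := by
      calc r * ((Real.log (Y / r) - t) + 1) ≤ r * ((Y / r) * Real.exp (-t)) := by
            exact mul_le_mul_of_nonneg_left key (le_of_lt hrpos)
        _ = Y * Real.exp (-t) := by field_simp
    nlinarith
  set target := Y - r * (1 + Real.log (Y / r)) with htarget
  have hIG : IsGreatest {u : ℝ | ∃ S : ι → ℝ, (∀ i, 0 ≤ S i) ∧
      u = (1 - ∏ i, (1 - y i) ^ (S i)) * Y - ∑ i, S i * a i} target := by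
    constructor
    · -- membership: achieved by concentrating on the argmin
      obtain ⟨i₀, -, hi₀⟩ := Finset.exists_mem_eq_inf' (Finset.univ_nonempty (α := ι))
        (fun i => a i / (-Real.log (1 - y i)))
      have hri₀ : r = a i₀ / c i₀ := by rw [hr, hi₀]
      have hlog_nonneg : 0 ≤ Real.log (Y / r) := by
        apply Real.log_nonneg
        rw [le_div_iff₀ hrpos]; linarith
      refine ⟨fun i => if i = i₀ then Real.log (Y / r) / c i₀ else 0, ?_, ?_⟩
      · intro i
        by_cases h : i = i₀ <;> simp [h]
        exact div_nonneg hlog_nonneg (le_of_lt (hc_pos i₀))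
      · rw [hprod]
        have hsum : ∀ f : ι → ℝ,
            ∑ i, (if i = i₀ then Real.log (Y / r) / c i₀ else 0) * f i
              = (Real.log (Y / r) / c i₀) * f i₀ := by
          intro f
          rw [Finset.sum_eq_single i₀]
          · simp
          · intro b _ hb; simp [hb]
          · simp
        rw [hsum, hsum]
        have hc₀ := hc_pos i₀
        have h1 : Real.log (Y / r) / c i₀ * c i₀ = Real.log (Y / r) := by field_simp
        have h2 : Real.log (Y / r) / c i₀ * a i₀ = r * Real.log (Y / r) := by
          rw [hri₀]; field_simp
        rw [h1, h2, Real.exp_neg, Real.exp_log (div_pos hY hrpos)]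
        have : (1 - (Y / r)⁻¹) * Y = Y - r := by field_simp
        rw [this, htarget]; ring
    · -- upper bound
      rintro u ⟨S, hS, rfl⟩
      rw [hprod]
      set T := ∑ i, S i * c i with hT
      have hcost : r * T ≤ ∑ i, S i * a i := by
        rw [hT, Finset.mul_sum]
        refine Finset.sum_le_sum fun i _ => ?_
        have := hr_le i
        have := hS i
        nlinarith
      calc (1 - Real.exp (-T)) * Y - ∑ i, S i * a i
          ≤ (1 - Real.exp (-T)) * Y - r * T := by linarith
        _ ≤ target := hbd T
  exact hIG.csSup_eq
end

section
/- Let ι be a nonempty finite index set, let yᵢ ∈ (0,1) and aᵢ > 0 for each i ∈ ι, let Y ≥ 0, and define U(S) = (1 − ∏ᵢ (1−yᵢ)^{Sᵢ})·Y − ∑ᵢ Sᵢ·aᵢ for vectors S with all Sᵢ ≥ 0. Let j* ∈ ι minimize aᵢ/(−log(1−yᵢ)). Then there exists a natural number s such that the vector placing s on coordinate j* and 0 elsewhere achieves U within a_{j*} of the supremum of U over all nonnegative real vectors S. -/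
/-- One-dimensional rounding lemma: some natural `s` is within `A` of the sup of
`t ↦ (1 - exp(-(l*t)))*Y - t*A` over `t ≥ 0`. -/
lemma gmax_aux (l A Y : ℝ) (hl : 0 < l) (hA : 0 < A) (hY : 0 ≤ Y) :
    ∃ s : ℕ, ∀ t : ℝ, 0 ≤ t →
      (1 - Real.exp (-(l * t))) * Y - t * A ≤
      (1 - Real.exp (-(l * (s : ℝ)))) * Y - (s : ℝ) * A + A := by
  by_cases hc : Y * l ≤ A
  · refine ⟨0, fun t ht => ?_⟩
    have h1 : 1 - Real.exp (-(l * t)) ≤ l * t := by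
      have := Real.add_one_le_exp (-(l * t)); linarith
    have h2 : (1 - Real.exp (-(l * t))) * Y ≤ l * t * Y :=
      mul_le_mul_of_nonneg_right h1 hY
    have h3 : t * (Y * l) ≤ t * A := mul_le_mul_of_nonneg_left hc ht
    simp only [Nat.cast_zero, mul_zero, neg_zero, Real.exp_zero]
    nlinarith
  · push_neg at hc
    have hYl : 0 < Y * l := lt_trans hA hc
    have hYpos : 0 < Y := by nlinarith
    set T := Real.log (Y * l / A) / l with hT
    have hratio : 1 < Y * l / A := (one_lt_div hA).mpr hc
    have hTnn : 0 ≤ T := div_nonneg (Real.log_nonneg hratio.le) hl.le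
    have hexpT : Real.exp (-(l * T)) = A / (Y * l) := by
      have h1 : l * T = Real.log (Y * l / A) := by
        rw [hT]; field_simp
      rw [h1, Real.exp_neg, Real.exp_log (div_pos hYl hA), inv_div]
    refine ⟨⌈T⌉₊, fun t ht => ?_⟩
    set s : ℝ := (⌈T⌉₊ : ℝ) with hs
    have hsT : T ≤ s := Nat.le_ceil T
    have hsT1 : s ≤ T + 1 := by
      have := Nat.ceil_lt_add_one hTnn; rw [hs]; linarith
    have hET := Real.exp_pos (-(l * T))
    -- convexity: exp x ≥ exp c * (1 + x - c)
    have key : Real.exp (-(l * T)) * (1 + (-(l * t) - -(l * T))) ≤ Real.exp (-(l * t)) := by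
      have h := Real.add_one_le_exp (-(l * t) - -(l * T))
      have h2 : Real.exp (-(l * t) - -(l * T)) * Real.exp (-(l * T)) = Real.exp (-(l * t)) := by
        rw [← Real.exp_add]; ring_nf
      nlinarith
    -- g t ≤ g T
    have step1 : (1 - Real.exp (-(l * t))) * Y - t * A ≤
        (1 - Real.exp (-(l * T))) * Y - T * A := by
      have h1 : (Real.exp (-(l * t)) - Real.exp (-(l * T))) * Y ≥
          Real.exp (-(l * T)) * (l * (T - t)) * Y := by nlinarith
      have h2 : Real.exp (-(l * T)) * (l * (T - t)) * Y = A * (T - t) := by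
        rw [hexpT]; field_simp
      nlinarith
    -- g T ≤ g s + A
    have step2 : (1 - Real.exp (-(l * T))) * Y - T * A ≤
        (1 - Real.exp (-(l * s))) * Y - s * A + A := by
      have h1 : Real.exp (-(l * s)) ≤ Real.exp (-(l * T)) := by
        apply Real.exp_le_exp.mpr; nlinarith
      nlinarith
    linarith

/-- An integer number of seeds of the single best type `j*` is within `a_{j*}` of the
supremum of the relaxed utility. -/
theorem integer_seeding_near_optimal {ι : Type*} [Fintype ι] [Nonempty ι] [DecidableEq ι]
    (y a : ι → ℝ) (hy : ∀ i, y i ∈ Set.Ioo (0 : ℝ) 1) (ha : ∀ i, 0 < a i)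
    (Y : ℝ) (hY : 0 ≤ Y)
    (j : ι) (hj : ∀ i, a j / (-Real.log (1 - y j)) ≤ a i / (-Real.log (1 - y i))) :
    ∃ s : ℕ,
      (1 - ∏ i, (1 - y i) ^ (if i = j then (s : ℝ) else 0)) * Y
          - ∑ i, (if i = j then (s : ℝ) else 0) * a i ≥
        sSup {u : ℝ | ∃ S : ι → ℝ, (∀ i, 0 ≤ S i) ∧
          u = (1 - ∏ i, (1 - y i) ^ (S i)) * Y - ∑ i, S i * a i} - a j := by
  have hpos : ∀ i, 0 < 1 - y i := fun i => by linarith [(hy i).2]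
  have hlt1 : ∀ i, 1 - y i < 1 := fun i => by linarith [(hy i).1]
  have hlpos : ∀ i, 0 < -Real.log (1 - y i) := fun i => by
    have := Real.log_neg (hpos i) (hlt1 i); linarith
  set l := fun i => -Real.log (1 - y i) with hl
  have hlE : ∀ i, -Real.log (1 - y i) = l i := fun _ => rfl
  simp only [hlE] at hj hlpos
  obtain ⟨s, hsmax⟩ := gmax_aux (l j) (a j) Y (hlpos j) (ha j) hY
  refine ⟨s, ?_⟩
  -- simplify the LHS
  have hprod : ∏ i, (1 - y i) ^ (if i = j then (s : ℝ) else 0) =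
      Real.exp (-(l j * (s : ℝ))) := by
    rw [Finset.prod_eq_single j]
    · rw [if_pos rfl, Real.rpow_def_of_pos (hpos j)]
      congr 1; simp [hl]
    · intro i _ hij; rw [if_neg hij, Real.rpow_zero]
    · intro h; exact absurd (Finset.mem_univ j) h
  have hsum : ∑ i, (if i = j then (s : ℝ) else 0) * a i = (s : ℝ) * a j := by
    rw [Finset.sum_eq_single j]
    · rw [if_pos rfl]
    · intro i _ hij; rw [if_neg hij, zero_mul]
    · intro h; exact absurd (Finset.mem_univ j) h
  rw [hprod, hsum, ge_iff_le, sub_le_iff_le_add]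
  apply csSup_le
  · exact ⟨0, fun _ => 0, fun i => le_refl 0, by simp⟩
  · rintro u ⟨S, hS, rfl⟩
    set t : ℝ := (∑ i, S i * l i) / l j with ht
    have htsum : 0 ≤ ∑ i, S i * l i :=
      Finset.sum_nonneg fun i _ => mul_nonneg (hS i) (hlpos i).le
    have htnn : 0 ≤ t := div_nonneg htsum (hlpos j).le
    have hprod2 : ∏ i, (1 - y i) ^ (S i) = Real.exp (-(l j * t)) := by
      have : ∀ i ∈ Finset.univ, (1 - y i) ^ (S i) = Real.exp (Real.log (1 - y i) * S i) :=
        fun i _ => Real.rpow_def_of_pos (hpos i) (S i)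
      rw [Finset.prod_congr rfl this, ← Real.exp_sum]
      congr 1
      have hlj : l j ≠ 0 := (hlpos j).ne'
      rw [ht]
      field_simp
      rw [Finset.sum_congr rfl (fun i _ => by simp [hl]; ring : ∀ i ∈ Finset.univ,
        Real.log (1 - y i) * S i = -(S i * l i))]
      rw [Finset.sum_neg_distrib]
    have hcost : t * a j ≤ ∑ i, S i * a i := by
      have h1 : ∀ i, S i * l i * (a j / l j) ≤ S i * a i := by
        intro i
        have h2 : a j / l j ≤ a i / l i := hj i
        have h3 : l i * (a j / l j) ≤ a i := by
          rw [div_le_div_iff₀ (hlpos j) (hlpos i)] at h2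
          calc l i * (a j / l j) = a j * l i / l j := by ring
          _ ≤ a i := by rw [div_le_iff₀ (hlpos j)]; linarith
        calc S i * l i * (a j / l j) = S i * (l i * (a j / l j)) := by ring
        _ ≤ S i * a i := mul_le_mul_of_nonneg_left h3 (hS i)
      calc t * a j = ∑ i, S i * l i * (a j / l j) := by
            rw [← Finset.sum_mul, ht]; field_simp
        _ ≤ ∑ i, S i * a i := Finset.sum_le_sum fun i _ => h1 i
    have := hsmax t htnn
    rw [hprod2]
    linarith
end
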